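/- (Local existence and uniqueness of the discrete Lagrangian flow.) Let E be a finite-dimensional real normed vector space and L : E × E → ℝ of class C² and regular (for every p ∈ E×E the bilinear form M(p) is nondegenerate). Suppose (x₀,y₀), (y₀,z₀) satisfy the discrete Euler–Lagrange equation D₂L(x₀,y₀) + D₁L(y₀,z₀) = 0. Then there exist open sets U₀ ∋ (x₀,y₀) and V₀ ∋ (y₀,z₀) in E×E and a map ξ : U₀ → V₀ such that: (1) ξ(x₀,y₀) = (y₀,z₀); (2) ξ is a bijection from U₀ onto V₀, Fréchet differentiable with Fréchet differentiable inverse; (3) pr₁(ξ(p)) = pr₂(p) and D₂L(p) + D₁L(ξ(p)) = 0 for all p ∈ U₀; (4) 𝔽⁻L is injective on V₀; and (5) ξ is unique in the following sense: for any open U₀' ∋ (x₀,y₀) and any map ξ' : U₀' → V₀ with pr₁(ξ'(p)) = pr₂(p) and D₂L(p) + D₁L(ξ'(p)) = 0 for all p ∈ U₀', one has ξ' = ξ on U₀ ∩ U₀'. -/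

import Mathlib

set_option maxHeartbeats 1000000
set_option linter.unusedSectionVars false


variable {E : Type*} [NormedAddCommGroup E] [NormedSpace ℝ E]

/-- The Fréchet derivative of `z ↦ L (z, y)` at `x`. -/
noncomputable def D1 (L : E × E → ℝ) (x y : E) : E →L[ℝ] ℝ :=
  fderiv ℝ (fun z => L (z, y)) x

/-- The Fréchet derivative of `z ↦ L (x, z)` at `y`. -/
noncomputable def D2 (L : E × E → ℝ) (x y : E) : E →L[ℝ] ℝ :=
  fderiv ℝ (fun z => L (x, z)) y

/-- The map `u ↦ M(p)(u, ·)` from `E` to `E*`, where `M(p)(u,v) = D²L(p)((u,0),(0,v))`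
is the mixed second Fréchet derivative of `L` at `p`. -/
noncomputable def Mlin (L : E × E → ℝ) (p : E × E) : E → (E →L[ℝ] ℝ) := fun u =>
  ((fderiv ℝ (fderiv ℝ L) p) (u, 0)).comp (ContinuousLinearMap.inr ℝ E E)

/-- The discrete Legendre transformation `𝔽⁻L(x,y) = (x, −D₁L(x,y))`. -/
noncomputable def FLegMinus (L : E × E → ℝ) : E × E → E × (E →L[ℝ] ℝ) :=
  fun p => (p.1, -(D1 L p.1 p.2))

namespace DiscreteLagrangeAux

open ContinuousLinearMap

/-- Precomposition with `inl` as a continuous linear map. -/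
noncomputable def A1 : ((E × E) →L[ℝ] ℝ) →L[ℝ] (E →L[ℝ] ℝ) :=
  (ContinuousLinearMap.compL ℝ E (E × E) ℝ).flip (ContinuousLinearMap.inl ℝ E E)

/-- Precomposition with `inr` as a continuous linear map. -/
noncomputable def A2 : ((E × E) →L[ℝ] ℝ) →L[ℝ] (E →L[ℝ] ℝ) :=
  (ContinuousLinearMap.compL ℝ E (E × E) ℝ).flip (ContinuousLinearMap.inr ℝ E E)

@[simp] lemma A1_apply (T : (E × E) →L[ℝ] ℝ) (h : E) : A1 (E := E) T h = T (h, 0) := rfl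
@[simp] lemma A2_apply (T : (E × E) →L[ℝ] ℝ) (h : E) : A2 (E := E) T h = T (0, h) := rfl

variable (L : E × E → ℝ)

lemma D1_eq (hL : Differentiable ℝ L) (x y : E) :
    D1 L x y = A1 (fderiv ℝ L (x, y)) := by
  have h := (hL (x, y)).hasFDerivAt.comp x (hasFDerivAt_prodMk_left (𝕜 := ℝ) x y)
  have h2 : D1 L x y = (fderiv ℝ L (x, y)).comp (ContinuousLinearMap.inl ℝ E E) := h.fderiv
  rw [h2]; rfl

lemma D2_eq (hL : Differentiable ℝ L) (x y : E) :
    D2 L x y = A2 (fderiv ℝ L (x, y)) := by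
  have h := (hL (x, y)).hasFDerivAt.comp y (hasFDerivAt_prodMk_right (𝕜 := ℝ) x y)
  have h2 : D2 L x y = (fderiv ℝ L (x, y)).comp (ContinuousLinearMap.inr ℝ E E) := h.fderiv
  rw [h2]; rfl

lemma Mlin_eq (p : E × E) (u : E) :
    Mlin L p u = A2 ((fderiv ℝ (fderiv ℝ L) p) (u, 0)) := rfl

lemma hasStrictB (hL : ContDiff ℝ 2 L) (p : E × E) :
    HasStrictFDerivAt (fderiv ℝ L) (fderiv ℝ (fderiv ℝ L) p) p :=
  ((hL.fderiv_right (m := 1) (by norm_num)).contDiffAt).hasStrictFDerivAt one_ne_zero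

lemma symmB (hL : ContDiff ℝ 2 L) (p v w : E × E) :
    fderiv ℝ (fderiv ℝ L) p v w = fderiv ℝ (fderiv ℝ L) p w v :=
  second_derivative_symmetric (fun y => (hL.differentiable (by norm_num) y).hasFDerivAt)
    (hasStrictB L hL p).hasFDerivAt v w

variable [FiniteDimensional ℝ E]

lemma eq_zero_of_Mlin (hreg : ∀ p : E × E, Function.Bijective (Mlin L p)) (p : E × E) {w : E}
    (hw : ∀ h, Mlin L p h w = 0) : w = 0 := by
  refine NormedSpace.eq_zero_of_forall_dual_eq_zero ℝ fun f => ?_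
  obtain ⟨h, rfl⟩ := (hreg p).2 f
  exact hw h

/-- `Mlin L p` as a continuous linear map. -/
noncomputable def Mclm (p : E × E) : E →L[ℝ] (E →L[ℝ] ℝ) :=
  (A2.comp (fderiv ℝ (fderiv ℝ L) p)).comp (ContinuousLinearMap.inl ℝ E E)

lemma coe_Mclm (p : E × E) : ⇑(Mclm L p) = Mlin L p := rfl

lemma finrank_dual (hreg : ∀ p : E × E, Function.Bijective (Mlin L p)) :
    Module.finrank ℝ E = Module.finrank ℝ (E →L[ℝ] ℝ) := by
  have hbij : Function.Bijective ⇑((Mclm L 0 : E →L[ℝ] (E →L[ℝ] ℝ)) : E →ₗ[ℝ] (E →L[ℝ] ℝ)) := by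
    rw [ContinuousLinearMap.coe_coe, coe_Mclm]; exact hreg 0
  exact (LinearEquiv.ofBijective _ hbij).finrank_eq

lemma exists_equiv_minus (hL : ContDiff ℝ 2 L)
    (hreg : ∀ p : E × E, Function.Bijective (Mlin L p)) (p : E × E) :
    ∃ e : (E × E) ≃L[ℝ] E × (E →L[ℝ] ℝ),
      HasStrictFDerivAt (FLegMinus L) (e : (E × E) →L[ℝ] E × (E →L[ℝ] ℝ)) p := by
  set B := fderiv ℝ (fderiv ℝ L) p with hB
  set Φ : (E × E) →L[ℝ] E × (E →L[ℝ] ℝ) :=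
    (ContinuousLinearMap.fst ℝ E E).prod (-(A1.comp B)) with hΦ
  have hΦapp : ∀ z : E × E, Φ z = (z.1, -(A1 (B z))) := fun z => rfl
  have hstrict : HasStrictFDerivAt (FLegMinus L) Φ p := by
    have hfun : FLegMinus L = fun q : E × E => (q.1, -(A1 (fderiv ℝ L q))) := by
      funext q
      show (q.1, -(D1 L q.1 q.2)) = _
      rw [D1_eq L (hL.differentiable (by norm_num))]
    rw [hfun]
    exact (hasStrictFDerivAt_fst).prodMk
      ((A1.hasStrictFDerivAt.comp p (hasStrictB L hL p)).neg)
  have hbij : Function.Bijective ⇑Φ := by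
    constructor
    · intro z z' hzz
      rw [hΦapp, hΦapp, Prod.mk.injEq] at hzz
      obtain ⟨h1, h2⟩ := hzz
      have h2' : A1 (B z) = A1 (B z') := neg_injective h2
      have hdiff : B ((0 : E), z.2 - z'.2) = B z - B z' := by
        rw [← map_sub]
        congr 1
        rw [Prod.ext_iff]
        constructor
        · simp [h1]
        · rfl
      have hw : ∀ h : E, Mlin L p h (z.2 - z'.2) = 0 := by
        intro h
        have e1 : Mlin L p h (z.2 - z'.2) = B (h, 0) (0, z.2 - z'.2) := rfl
        rw [e1, symmB L hL p, hdiff]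
        have e2 : (B z - B z') (h, 0) = A1 (B z) h - A1 (B z') h := by
          simp
        rw [e2, h2', sub_self]
      have h3 : z.2 - z'.2 = 0 := eq_zero_of_Mlin L hreg p hw
      exact Prod.ext h1 (sub_eq_zero.mp h3)
    · rintro ⟨a, φ⟩
      set N : E →L[ℝ] (E →L[ℝ] ℝ) :=
        A1.comp (B.comp (ContinuousLinearMap.inr ℝ E E)) with hN
      have hNapp : ∀ v h, N v h = Mlin L p h v := by
        intro v h
        show B (0, v) (h, 0) = B (h, 0) (0, v)
        exact symmB L hL p _ _
      have hNinj : Function.Injective ⇑N := by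
        intro v v' hvv
        have hw : ∀ h, Mlin L p h (v - v') = 0 := by
          intro h
          have h4 : Mlin L p h v = Mlin L p h v' := by rw [← hNapp, ← hNapp, hvv]
          rw [map_sub, h4, sub_self]
        exact sub_eq_zero.mp (eq_zero_of_Mlin L hreg p hw)
      have hNsurj : Function.Surjective ⇑N := by
        have := (LinearMap.injective_iff_surjective_of_finrank_eq_finrank
          (f := (N : E →ₗ[ℝ] (E →L[ℝ] ℝ))) (finrank_dual L hreg)).mp
        simp only [ContinuousLinearMap.coe_coe] at this
        exact this hNinj
      obtain ⟨v, hv⟩ := hNsurj (-φ - A1 (B (a, 0)))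
      refine ⟨(a, v), ?_⟩
      rw [hΦapp, Prod.mk.injEq]
      refine ⟨rfl, ?_⟩
      have hsum : B (a, v) = B (a, 0) + B ((0 : E), v) := by
        rw [← map_add]
        congr 1
        rw [Prod.ext_iff]
        constructor <;> simp
      have hNv : A1 (B ((0 : E), v)) = N v := rfl
      rw [hsum, map_add, hNv, hv]
      abel
  let el : (E × E) ≃ₗ[ℝ] E × (E →L[ℝ] ℝ) :=
    LinearEquiv.ofBijective (Φ : (E × E) →ₗ[ℝ] E × (E →L[ℝ] ℝ))
      (by rwa [ContinuousLinearMap.coe_coe])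
  refine ⟨el.toContinuousLinearEquiv, ?_⟩
  have hcoe : (el.toContinuousLinearEquiv : (E × E) →L[ℝ] E × (E →L[ℝ] ℝ)) = Φ :=
    ContinuousLinearMap.ext fun z => rfl
  rw [hcoe]
  exact hstrict

/-- The "plus" Legendre transform written via `A2`. -/
noncomputable def fP : E × E → E × (E →L[ℝ] ℝ) := fun p => (p.2, A2 (fderiv ℝ L p))

lemma fP_eq (hL : ContDiff ℝ 2 L) (p : E × E) : fP L p = (p.2, D2 L p.1 p.2) := by
  show (p.2, A2 (fderiv ℝ L p)) = _
  rw [D2_eq L (hL.differentiable (by norm_num))]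

lemma exists_equiv_plus (hL : ContDiff ℝ 2 L)
    (hreg : ∀ p : E × E, Function.Bijective (Mlin L p)) (p : E × E) :
    ∃ e : (E × E) ≃L[ℝ] E × (E →L[ℝ] ℝ),
      HasStrictFDerivAt (fP L) (e : (E × E) →L[ℝ] E × (E →L[ℝ] ℝ)) p := by
  set B := fderiv ℝ (fderiv ℝ L) p with hB
  set Φ : (E × E) →L[ℝ] E × (E →L[ℝ] ℝ) :=
    (ContinuousLinearMap.snd ℝ E E).prod (A2.comp B) with hΦ
  have hΦapp : ∀ z : E × E, Φ z = (z.2, A2 (B z)) := fun z => rfl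
  have hstrict : HasStrictFDerivAt (fP L) Φ p :=
    (hasStrictFDerivAt_snd).prodMk (A2.hasStrictFDerivAt.comp p (hasStrictB L hL p))
  have hMzero : ∀ w : E, Mlin L p w = 0 → w = 0 := by
    intro w hw
    have h0 : Mlin L p (0 : E) = 0 := by
      rw [Mlin_eq]
      have : ((0 : E), (0 : E)) = (0 : E × E) := rfl
      rw [this, map_zero, map_zero]
    exact (hreg p).1 (hw.trans h0.symm)
  have hbij : Function.Bijective ⇑Φ := by
    constructor
    · intro z z' hzz
      rw [hΦapp, hΦapp, Prod.mk.injEq] at hzz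
      obtain ⟨h1, h2⟩ := hzz
      have hdiff : B (z.1 - z'.1, (0 : E)) = B z - B z' := by
        rw [← map_sub]
        congr 1
        rw [Prod.ext_iff]
        constructor
        · rfl
        · simp [h1]
      have hM : Mlin L p (z.1 - z'.1) = 0 := by
        rw [Mlin_eq, hdiff, map_sub]
        have e2 : A2 (B z) = A2 (B z') := h2
        rw [e2, sub_self]
      exact Prod.ext (sub_eq_zero.mp (hMzero _ hM)) h1
    · rintro ⟨b, φ⟩
      obtain ⟨u, hu⟩ := (hreg p).2 (φ - A2 (B ((0 : E), b)))
      refine ⟨(u, b), ?_⟩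
      rw [hΦapp, Prod.mk.injEq]
      refine ⟨rfl, ?_⟩
      have hsum : B (u, b) = B (u, (0 : E)) + B ((0 : E), b) := by
        rw [← map_add]
        congr 1
        rw [Prod.ext_iff]
        constructor <;> simp
      have hMu : A2 (B (u, (0 : E))) = Mlin L p u := rfl
      rw [hsum, map_add, hMu, hu]
      abel
  let el : (E × E) ≃ₗ[ℝ] E × (E →L[ℝ] ℝ) :=
    LinearEquiv.ofBijective (Φ : (E × E) →ₗ[ℝ] E × (E →L[ℝ] ℝ))
      (by rwa [ContinuousLinearMap.coe_coe])
  refine ⟨el.toContinuousLinearEquiv, ?_⟩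
  have hcoe : (el.toContinuousLinearEquiv : (E × E) →L[ℝ] E × (E →L[ℝ] ℝ)) = Φ :=
    ContinuousLinearMap.ext fun z => rfl
  rw [hcoe]
  exact hstrict

end DiscreteLagrangeAux

open DiscreteLagrangeAux in
/-- Local existence and uniqueness of the discrete Lagrangian flow for a regular
discrete Lagrangian. -/
theorem regular_localFlow_exists_unique
    [FiniteDimensional ℝ E] (L : E × E → ℝ) (hL : ContDiff ℝ 2 L)
    (hreg : ∀ p : E × E, Function.Bijective (Mlin L p))
    (x0 y0 z0 : E) (hDEL : D2 L x0 y0 + D1 L y0 z0 = 0) :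
    ∃ (U0 V0 : Set (E × E)) (ξ : E × E → E × E),
      IsOpen U0 ∧ IsOpen V0 ∧ (x0, y0) ∈ U0 ∧ (y0, z0) ∈ V0 ∧
      -- (1) ξ maps (x₀,y₀) to (y₀,z₀)
      ξ (x0, y0) = (y0, z0) ∧
      -- (2) ξ is a diffeomorphism from U₀ onto V₀
      Set.BijOn ξ U0 V0 ∧ DifferentiableOn ℝ ξ U0 ∧
      (∃ g : E × E → E × E, Set.InvOn g ξ U0 V0 ∧ DifferentiableOn ℝ g V0) ∧
      -- (3) ξ is a (local) discrete Lagrangian evolution operator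
      (∀ p ∈ U0, (ξ p).1 = p.2 ∧ D2 L p.1 p.2 + D1 L (ξ p).1 (ξ p).2 = 0) ∧
      -- (4) 𝔽⁻L is injective on V₀
      Set.InjOn (FLegMinus L) V0 ∧
      -- (5) uniqueness
      (∀ (U0' : Set (E × E)) (ξ' : E × E → E × E), IsOpen U0' → (x0, y0) ∈ U0' →
        (∀ p ∈ U0', ξ' p ∈ V0 ∧ (ξ' p).1 = p.2
            ∧ D2 L p.1 p.2 + D1 L (ξ' p).1 (ξ' p).2 = 0) →
        ∀ p ∈ U0 ∩ U0', ξ' p = ξ p) := by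
  classical
  -- abbreviations
  set p0 : E × E := (x0, y0) with hp0def
  set q0 : E × E := (y0, z0) with hq0def
  -- strict differentiability with invertible derivative, everywhere
  have hMall := exists_equiv_minus L hL hreg
  have hPall := exists_equiv_plus L hL hreg
  obtain ⟨em, hem⟩ := hMall q0
  obtain ⟨ep, hep⟩ := hPall p0
  -- the two local homeomorphisms from the inverse function theorem
  set hm : OpenPartialHomeomorph (E × E) (E × (E →L[ℝ] ℝ)) := hem.toOpenPartialHomeomorph _ with hmdef
  set hp : OpenPartialHomeomorph (E × E) (E × (E →L[ℝ] ℝ)) := hep.toOpenPartialHomeomorph _ with hpdef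
  have hmcoe : ⇑hm = FLegMinus L := rfl
  have hpcoe : ⇑hp = fP L := rfl
  have hq0s : q0 ∈ hm.source := hem.mem_toOpenPartialHomeomorph_source
  have hp0s : p0 ∈ hp.source := hep.mem_toOpenPartialHomeomorph_source
  -- differentiability and continuity of the Legendre transforms
  have hPdiff : Differentiable ℝ (fP L) := fun p => by
    obtain ⟨e, he⟩ := hPall p; exact he.differentiableAt
  have hMdiff : Differentiable ℝ (FLegMinus L) := fun p => by
    obtain ⟨e, he⟩ := hMall p; exact he.differentiableAt
  -- the key compatibility point
  have hkey : fP L p0 = FLegMinus L q0 := by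
    rw [fP_eq L hL]
    show (y0, D2 L x0 y0) = (y0, -(D1 L y0 z0))
    rw [eq_neg_of_add_eq_zero_left hDEL]
  -- the open sets
  set W : Set (E × (E →L[ℝ] ℝ)) := hp.target ∩ hm.target with hWdef
  have hWopen : IsOpen W := hp.open_target.inter hm.open_target
  set U0 : Set (E × E) := hp.source ∩ fP L ⁻¹' W with hU0def
  set V0 : Set (E × E) := hm.source ∩ FLegMinus L ⁻¹' W with hV0def
  have hU0open : IsOpen U0 := hp.open_source.inter (hWopen.preimage hPdiff.continuous)
  have hV0open : IsOpen V0 := hm.open_source.inter (hWopen.preimage hMdiff.continuous)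
  -- memberships
  have hc0W : fP L p0 ∈ W := by
    constructor
    · exact hp.map_source hp0s
    · rw [hkey]; exact hm.map_source hq0s
  have hp0U0 : p0 ∈ U0 := ⟨hp0s, hc0W⟩
  have hq0V0 : q0 ∈ V0 := ⟨hq0s, by rw [Set.mem_preimage, ← hkey]; exact hc0W⟩
  -- the flow and its inverse
  set ξ : E × E → E × E := fun p => hm.symm (fP L p) with hξdef
  set g : E × E → E × E := fun q => hp.symm (FLegMinus L q) with hgdef
  -- basic facts about ξ on U0
  have hxiV0 : ∀ p ∈ U0, ξ p ∈ V0 := by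
    intro p hp'
    obtain ⟨hps, hpw⟩ := hp'
    have htgt : fP L p ∈ hm.target := hpw.2
    refine ⟨hm.map_target htgt, ?_⟩
    have : FLegMinus L (hm.symm (fP L p)) = fP L p := hm.right_inv htgt
    rw [Set.mem_preimage]
    show FLegMinus L (hm.symm (fP L p)) ∈ W
    rw [this]; exact hpw
  have hFLxi : ∀ p ∈ U0, FLegMinus L (ξ p) = fP L p := by
    intro p hp'
    exact hm.right_inv hp'.2.2
  -- (1)
  have hxi0 : ξ p0 = q0 := by
    show hm.symm (fP L p0) = q0
    rw [hkey]
    exact hm.left_inv hq0s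
  -- (2) bijectivity
  have hbij : Set.BijOn ξ U0 V0 := by
    refine ⟨hxiV0, ?_, ?_⟩
    · intro p hp' p' hp'' heq
      have h1 : fP L p = fP L p' := by
        rw [← hFLxi p hp', ← hFLxi p' hp'', heq]
      exact hp.injOn hp'.1 hp''.1 h1
    · intro q hq'
      obtain ⟨hqs, hqw⟩ := hq'
      have htg : FLegMinus L q ∈ hp.target := hqw.1
      refine ⟨hp.symm (FLegMinus L q), ⟨hp.map_target htg, ?_⟩, ?_⟩
      · rw [Set.mem_preimage]
        show fP L (hp.symm (FLegMinus L q)) ∈ W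
        rw [show fP L (hp.symm (FLegMinus L q)) = FLegMinus L q from hp.right_inv htg]
        exact hqw
      · show hm.symm (fP L (hp.symm (FLegMinus L q))) = q
        rw [show fP L (hp.symm (FLegMinus L q)) = FLegMinus L q from hp.right_inv htg]
        exact hm.left_inv hqs
  -- inverse function property
  have hinv : Set.InvOn g ξ U0 V0 := by
    constructor
    · intro p hp'
      show hp.symm (FLegMinus L (hm.symm (fP L p))) = p
      rw [hFLxi p hp']
      exact hp.left_inv hp'.1
    · intro q hq'
      show hm.symm (fP L (hp.symm (FLegMinus L q))) = q
      rw [show fP L (hp.symm (FLegMinus L q)) = FLegMinus L q from hp.right_inv hq'.2.1]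
      exact hm.left_inv hq'.1
  -- differentiability of ξ on U0
  have hxidiff : DifferentiableOn ℝ ξ U0 := by
    intro p hp'
    have htgt : fP L p ∈ hm.target := hp'.2.2
    obtain ⟨e, he⟩ := hMall (hm.symm (fP L p))
    have hsymm : DifferentiableAt ℝ hm.symm (fP L p) :=
      (hm.hasStrictFDerivAt_symm htgt he).differentiableAt
    exact (hsymm.comp p (hPdiff p)).differentiableWithinAt
  -- differentiability of g on V0
  have hgdiff : DifferentiableOn ℝ g V0 := by
    intro q hq'
    have htgt : FLegMinus L q ∈ hp.target := hq'.2.1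
    obtain ⟨e, he⟩ := hPall (hp.symm (FLegMinus L q))
    have hsymm : DifferentiableAt ℝ hp.symm (FLegMinus L q) :=
      (hp.hasStrictFDerivAt_symm htgt he).differentiableAt
    exact (hsymm.comp q (hMdiff q)).differentiableWithinAt
  -- (3)
  have hflow : ∀ p ∈ U0, (ξ p).1 = p.2 ∧ D2 L p.1 p.2 + D1 L (ξ p).1 (ξ p).2 = 0 := by
    intro p hp'
    have h1 : FLegMinus L (ξ p) = fP L p := hFLxi p hp'
    have h2 : ((ξ p).1, -(D1 L (ξ p).1 (ξ p).2)) = (p.2, D2 L p.1 p.2) := by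
      rw [← fP_eq L hL]
      exact h1
    rw [Prod.mk.injEq] at h2
    refine ⟨h2.1, ?_⟩
    rw [← h2.2]
    abel
  -- (4)
  have hinj : Set.InjOn (FLegMinus L) V0 := by
    intro q hq' q' hq'' heq
    exact hm.injOn hq'.1 hq''.1 heq
  -- (5)
  have huniq : ∀ (U0' : Set (E × E)) (ξ' : E × E → E × E), IsOpen U0' → (x0, y0) ∈ U0' →
      (∀ p ∈ U0', ξ' p ∈ V0 ∧ (ξ' p).1 = p.2
          ∧ D2 L p.1 p.2 + D1 L (ξ' p).1 (ξ' p).2 = 0) →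
      ∀ p ∈ U0 ∩ U0', ξ' p = ξ p := by
    intro U0' ξ' _ _ hξ' p hpmem
    obtain ⟨hpU0, hpU0'⟩ := hpmem
    obtain ⟨hmemV0, hfst, hDEL'⟩ := hξ' p hpU0'
    apply hinj hmemV0 (hxiV0 p hpU0)
    have h1 : FLegMinus L (ξ' p) = fP L p := by
      rw [fP_eq L hL]
      show ((ξ' p).1, -(D1 L (ξ' p).1 (ξ' p).2)) = (p.2, D2 L p.1 p.2)
      rw [Prod.mk.injEq]
      exact ⟨hfst, (eq_neg_of_add_eq_zero_left hDEL').symm⟩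
    rw [h1, hFLxi p hpU0]
  exact ⟨U0, V0, ξ, hU0open, hV0open, hp0U0, hq0V0, hxi0, hbij, hxidiff,
    ⟨g, hinv, hgdiff⟩, hflow, hinj, huniq⟩
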